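/- Let (W,S) be a Coxeter system, w ∈ W, and let D_L(w) = {s ∈ S : ℓ(sw) < ℓ(w)} and D_R(w) = {s ∈ S : ℓ(ws) < ℓ(w)}. For any u ≤ w, x ∈ W_{D_L(w)}, and y ∈ W_{D_R(w)}, we have xuy ≤ w. That is, the double coset W_{D_L(w)} u W_{D_R(w)} is contained in the lower Bruhat interval [e,w]. -/

import Mathlib

open CoxeterSystem List

variable {B W : Type*} [Group W] {M : CoxeterMatrix B}

namespace CoxeterBruhat

/-- One edge in the Bruhat graph: `v = t * u` for a reflection `t`, with `ℓ(u) < ℓ(v)`. -/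
def Step (cs : CoxeterSystem M W) (u v : W) : Prop :=
  ∃ t : W, cs.IsReflection t ∧ v = t * u ∧ cs.length u < cs.length v

/-- The Bruhat order, as the reflexive-transitive closure of `Step`. -/
def BruhatLE (cs : CoxeterSystem M W) : W → W → Prop :=
  Relation.ReflTransGen (Step cs)

/-- The standard parabolic subgroup generated by the simple reflections indexed by `I`. -/
def parabolic (cs : CoxeterSystem M W) (I : Set B) : Subgroup W :=
  Subgroup.closure (cs.simple '' I)

/-- The left descent set `D_L(w)`. -/
def leftDescents (cs : CoxeterSystem M W) (w : W) : Set B :=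
  {i | cs.IsLeftDescent w i}

/-- The right descent set `D_R(w)`. -/
def rightDescents (cs : CoxeterSystem M W) (w : W) : Set B :=
  {i | cs.IsRightDescent w i}

/-- The double coset `W_I u W_J` as a set. -/
def doubleCoset (cs : CoxeterSystem M W) (I J : Set B) (u : W) : Set W :=
  {v | ∃ x ∈ parabolic cs I, ∃ y ∈ parabolic cs J, v = x * u * y}

/-- The Bruhat coset `C_w(u) = W_{D_L(w)} u W_{D_R(w)}`. -/
def bCoset (cs : CoxeterSystem M W) (w u : W) : Set W :=
  doubleCoset cs (leftDescents cs w) (rightDescents cs w) u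

/-- The lower Bruhat interval `B(w) = [e, w]`. -/
def lowerInterval (cs : CoxeterSystem M W) (w : W) : Set W :=
  {v | BruhatLE cs v w}

/-- The support `S(v)` of `v`: simple reflections below `v` in Bruhat order. -/
def support (cs : CoxeterSystem M W) (v : W) : Set B :=
  {i | BruhatLE cs (cs.simple i) v}


/-!
If `s` is a left descent of `w` and `u ≤ w`, then `s u ≤ w`: along a Bruhat chain from `u` up
to `w`, multiplying by `s` either keeps a chain step or collapses it, the collapse being forced
by the strong exchange condition. Since `W_{D_L(w)}` is generated by such `s`, it maps `[e, w]`
into itself from the left, and inverting everything gives the same for `W_{D_R(w)}` on the right.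

Strong exchange is deduced from Tits' parity representation of `W` on `W × ℤ/2`, in which
`s i` sends `(t, ε)` to `(s i * t * s i, ε + [t = s i])`: the parity `η(w, t)` it produces counts,
modulo 2, the occurrences of `t` in the right inversion sequence of any word for `w`, so it is a
well-defined cocycle and detects whether `ℓ (w * t) < ℓ w`.
-/

section StrongExchange

open scoped Classical

variable (cs : CoxeterSystem M W)

theorem prod_map_alternatingWord_two_mul {G : Type*} [Monoid G] (f : B → G) (i j : B) (m : ℕ) :
    ((alternatingWord i j (2 * m)).map f).prod = (f i * f j) ^ m := by
  induction m with
  | zero => simp [alternatingWord]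
  | succ m ih =>
    rw [Nat.mul_succ, alternatingWord_succ', alternatingWord_succ',
      if_neg (Nat.not_even_two_mul_add_one m), if_pos (even_two_mul m)]
    simp [ih, pow_succ', mul_assoc]

theorem rightInvSeq_alternatingWord (i j : B) (n : ℕ) :
    cs.rightInvSeq (alternatingWord i j n) =
      (List.range n).reverse.map fun k => (cs.simple j * cs.simple i) ^ k * cs.simple j := by
  induction n generalizing i j with
  | zero => simp [alternatingWord]
  | succ n ih =>
    rw [alternatingWord_succ, rightInvSeq_concat, ih, List.range_succ_eq_map]
    simp [mul_pow_mul, pow_succ', mul_assoc]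

theorem even_count_rightInvSeq_alternatingWord (i j : B) (t : W) :
    Even ((cs.rightInvSeq (alternatingWord i j (2 * M i j))).count t) := by
  have hperiodic : ∀ k, (cs.simple j * cs.simple i) ^ (M i j + k) * cs.simple j =
      (cs.simple j * cs.simple i) ^ k * cs.simple j := fun k => by
    rw [pow_add, cs.simple_mul_simple_pow', one_mul]
  rw [rightInvSeq_alternatingWord, List.map_reverse, List.count_reverse, two_mul,
    List.range_add, List.map_append, List.count_append, List.map_map]
  simp only [Function.comp_def, hperiodic]
  exact ⟨_, rfl⟩

noncomputable def simpleParityPerm (i : B) : Equiv.Perm (W × ZMod 2) :=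
  Function.Involutive.toPerm
    (fun p => (cs.simple i * p.1 * cs.simple i, p.2 + if p.1 = cs.simple i then 1 else 0)) <| by
    rintro ⟨t, ε⟩
    have hfix : cs.simple i * (t * cs.simple i) = cs.simple i ↔ t = cs.simple i := by
      rw [mul_eq_left, mul_eq_one_iff_eq_inv, cs.inv_simple]
    simp only [mul_assoc, cs.simple_mul_simple_self, mul_one, cs.simple_mul_simple_cancel_left,
      hfix, add_assoc, CharTwo.add_self_eq_zero, add_zero]

theorem prod_map_simpleParityPerm_apply (ω : List B) (t : W) (ε : ZMod 2) :
    (ω.map (simpleParityPerm cs)).prod (t, ε) =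
      (cs.wordProd ω * t * (cs.wordProd ω)⁻¹, ε + (cs.rightInvSeq ω).count t) := by
  induction ω generalizing ε with
  | nil => simp
  | cons i ω ih =>
    have hfix : cs.wordProd ω * (t * (cs.wordProd ω)⁻¹) = cs.simple i ↔
        (cs.wordProd ω)⁻¹ * (cs.simple i * cs.wordProd ω) = t := by
      constructor <;> intro h <;> rw [← h] <;> group
    simp only [List.map_cons, List.prod_cons, Equiv.Perm.mul_apply, ih, simpleParityPerm,
      Function.Involutive.coe_toPerm, hfix, rightInvSeq, List.count_cons, beq_iff_eq,
      cs.wordProd_cons, mul_inv_rev, cs.inv_simple, mul_assoc, Nat.cast_add, add_assoc]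
    split_ifs <;> simp

theorem isLiftable_simpleParityPerm : M.IsLiftable (simpleParityPerm cs) := by
  intro i j
  have hprod : cs.wordProd (alternatingWord i j (2 * M i j)) = 1 := by
    rw [wordProd, prod_map_alternatingWord_two_mul, cs.simple_mul_simple_pow]
  ext ⟨t, ε⟩ : 1
  rw [← prod_map_alternatingWord_two_mul, prod_map_simpleParityPerm_apply, hprod,
    (even_count_rightInvSeq_alternatingWord cs i j t).natCast_zmod_two]
  simp

noncomputable def parityRep : W →* Equiv.Perm (W × ZMod 2) :=
  cs.lift ⟨simpleParityPerm cs, isLiftable_simpleParityPerm cs⟩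

theorem parityRep_wordProd (ω : List B) :
    parityRep cs (cs.wordProd ω) = (ω.map (simpleParityPerm cs)).prod := by
  simp [parityRep, wordProd, map_list_prod, Function.comp_def, cs.lift_apply_simple]

/-- The parity `η(w, t)`: whether `t` occurs an odd number of times in the right inversion
sequence of a word for `w`. -/
noncomputable def inversionParity (w t : W) : ZMod 2 :=
  (parityRep cs w (t, 0)).2

theorem inversionParity_wordProd (ω : List B) (t : W) :
    inversionParity cs (cs.wordProd ω) t = (cs.rightInvSeq ω).count t := by
  rw [inversionParity, parityRep_wordProd, prod_map_simpleParityPerm_apply, zero_add]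

theorem parityRep_apply (w t : W) (ε : ZMod 2) :
    parityRep cs w (t, ε) = (w * t * w⁻¹, ε + inversionParity cs w t) := by
  obtain ⟨ω, rfl⟩ := cs.wordProd_surjective w
  rw [parityRep_wordProd, prod_map_simpleParityPerm_apply, inversionParity_wordProd]

theorem inversionParity_mul (u v t : W) :
    inversionParity cs (u * v) t = inversionParity cs v t + inversionParity cs u (v * t * v⁻¹) := by
  rw [inversionParity, map_mul, Equiv.Perm.mul_apply, parityRep_apply, parityRep_apply, zero_add]

theorem inversionParity_one (t : W) : inversionParity cs 1 t = 0 := by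
  simpa using inversionParity_wordProd cs [] t

theorem inversionParity_simple_self (i : B) :
    inversionParity cs (cs.simple i) (cs.simple i) = 1 := by
  simpa using inversionParity_wordProd cs [i] (cs.simple i)

theorem inversionParity_self {t : W} (ht : cs.IsReflection t) : inversionParity cs t t = 1 := by
  obtain ⟨w, i, rfl⟩ := ht
  have hcancel := inversionParity_mul cs w w⁻¹ (w * cs.simple i * w⁻¹)
  have hsplit := inversionParity_mul cs (w * cs.simple i) w⁻¹ (w * cs.simple i * w⁻¹)
  have hsimple := inversionParity_mul cs w (cs.simple i) (cs.simple i)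
  simp only [mul_inv_cancel, inv_inv, inversionParity_one, inversionParity_simple_self,
    cs.inv_simple, cs.simple_mul_simple_cancel_right, mul_assoc, inv_mul_cancel_left,
    mul_inv_cancel, inv_mul_cancel, mul_one] at hcancel hsplit hsimple ⊢
  linear_combination hsplit - hcancel + hsimple

theorem mem_rightInvSeq_of_inversionParity_eq_one {ω : List B} {t : W}
    (h : inversionParity cs (cs.wordProd ω) t = 1) : t ∈ cs.rightInvSeq ω := by
  rw [inversionParity_wordProd, ZMod.natCast_eq_one_iff_odd] at h
  exact List.count_pos_iff.mp h.pos

theorem isRightInversion_of_inversionParity_eq_one {w t : W} (h : inversionParity cs w t = 1) :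
    cs.IsRightInversion w t := by
  obtain ⟨ω, hω, rfl⟩ := cs.exists_isReduced w
  exact cs.isRightInversion_of_mem_rightInvSeq hω (mem_rightInvSeq_of_inversionParity_eq_one cs h)

theorem inversionParity_eq_one_of_isRightInversion {w t : W} (h : cs.IsRightInversion w t) :
    inversionParity cs w t = 1 := by
  obtain ⟨ht, hlt⟩ := h
  have hsum : inversionParity cs w t = 1 + inversionParity cs (w * t) t := by
    simpa [mul_assoc, ht.mul_self, ht.inv, inversionParity_self cs ht] using
      inversionParity_mul cs (w * t) t t
  rcases (by decide : ∀ a : ZMod 2, a = 0 ∨ a = 1) (inversionParity cs (w * t) t) with h0 | h1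
  · simpa [h0] using hsum
  · have hlt' := (isRightInversion_of_inversionParity_eq_one cs h1).2
    rw [mul_assoc, ht.mul_self, mul_one] at hlt'
    omega

theorem mem_leftInvSeq_of_isLeftInversion {ω : List B} {t : W}
    (h : cs.IsLeftInversion (cs.wordProd ω) t) : t ∈ cs.leftInvSeq ω := by
  rw [← cs.isRightInversion_inv_iff, ← cs.wordProd_reverse] at h
  have hmem := mem_rightInvSeq_of_inversionParity_eq_one cs
    (inversionParity_eq_one_of_isRightInversion cs h)
  rwa [cs.rightInvSeq_reverse, List.mem_reverse] at hmem

/-- The strong exchange condition. -/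
theorem exists_reflection_mul_wordProd_eq_eraseIdx {ω : List B} {t : W}
    (h : cs.IsLeftInversion (cs.wordProd ω) t) :
    ∃ j < ω.length, t * cs.wordProd ω = cs.wordProd (ω.eraseIdx j) := by
  obtain ⟨j, hj, rfl⟩ := List.mem_iff_getElem.mp (mem_leftInvSeq_of_isLeftInversion cs h)
  refine ⟨j, by simpa using hj, ?_⟩
  rw [← List.getD_eq_getElem _ 1, cs.getD_leftInvSeq_mul_wordProd]

theorem simple_mul_eq_of_length_add_one {u v t : W} {i : B} (ht : cs.IsReflection t)
    (hv : v = t * u) (hlen : cs.length u + 1 = cs.length v) (hvi : cs.IsLeftDescent v i)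
    (hui : ¬ cs.IsLeftDescent u i) : cs.simple i * u = v := by
  rw [cs.isLeftDescent_iff] at hvi
  rw [cs.not_isLeftDescent_iff] at hui
  obtain ⟨τ, hτ, hτeq⟩ := cs.exists_isReduced (cs.simple i * v)
  have hτlen : cs.length (cs.simple i * v) = τ.length := hτeq ▸ hτ
  have hvτ : v = cs.wordProd (i :: τ) := by
    rw [cs.wordProd_cons, ← hτeq, cs.simple_mul_simple_cancel_left]
  have htv : t * v = u := by rw [hv, ← mul_assoc, ht.mul_self, one_mul]
  obtain ⟨j, hj, hexch⟩ :=
    exists_reflection_mul_wordProd_eq_eraseIdx cs (ω := i :: τ) ⟨ht, by rw [← hvτ, htv]; omega⟩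
  rw [← hvτ, htv] at hexch
  cases j with
  | zero =>
    rw [hexch, List.eraseIdx_cons_zero, ← hτeq, cs.simple_mul_simple_cancel_left]
  | succ j =>
    have hsu : cs.simple i * u = cs.wordProd (τ.eraseIdx j) := by
      rw [hexch, List.eraseIdx_cons_succ, cs.wordProd_cons, cs.simple_mul_simple_cancel_left]
    have hsu_le := cs.length_wordProd_le (τ.eraseIdx j)
    rw [← hsu, List.length_eraseIdx_of_lt (by simpa using hj)] at hsu_le
    omega

end StrongExchange

section BruhatOrder

variable {cs : CoxeterSystem M W}

theorem Step.inv {u v : W} (h : Step cs u v) : Step cs u⁻¹ v⁻¹ := by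
  obtain ⟨t, ht, rfl, hlt⟩ := h
  refine ⟨u⁻¹ * t * u, by simpa using ht.conj u⁻¹, ?_, by rwa [cs.length_inv, cs.length_inv]⟩
  rw [mul_inv_rev, ht.inv]
  group

theorem BruhatLE.inv {u v : W} (h : BruhatLE cs u v) : BruhatLE cs u⁻¹ v⁻¹ :=
  Relation.ReflTransGen.lift _ (fun _ _ => Step.inv) _ _ h

theorem step_simple_mul_of_isLeftDescent {w : W} {i : B} (hw : cs.IsLeftDescent w i) :
    Step cs (cs.simple i * w) w :=
  ⟨cs.simple i, cs.isReflection_simple i, (cs.simple_mul_simple_cancel_left i).symm, hw⟩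

theorem Step.simple_mul_eq_or_step {u v : W} {i : B} (h : Step cs u v)
    (hui : ¬ cs.IsLeftDescent u i) :
    cs.simple i * u = v ∨ Step cs (cs.simple i * u) (cs.simple i * v) := by
  obtain ⟨t, ht, rfl, hlt⟩ := h
  have hconj : cs.simple i * (t * u) =
      (cs.simple i * t * (cs.simple i)⁻¹) * (cs.simple i * u) := by group
  have hne := (ht.conj (cs.simple i)).length_mul_right_ne (cs.simple i * u)
  rw [← hconj] at hne
  have hsu := cs.not_isLeftDescent_iff.mp hui
  by_cases hvi : cs.IsLeftDescent (t * u) i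
  · rcases hne.lt_or_gt with hgt | hlt'
    · have hsv := cs.isLeftDescent_iff.mp hvi
      exact .inl (simple_mul_eq_of_length_add_one cs ht rfl (by omega) hvi hui)
    · exact .inr ⟨_, ht.conj (cs.simple i), hconj, hlt'⟩
  · have hsv := cs.not_isLeftDescent_iff.mp hvi
    exact .inr ⟨_, ht.conj (cs.simple i), hconj, by omega⟩

theorem BruhatLE.simple_mul {w u : W} {i : B} (hw : cs.IsLeftDescent w i)
    (h : BruhatLE cs u w) : BruhatLE cs (cs.simple i * u) w := by
  induction h using Relation.ReflTransGen.head_induction_on with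
  | refl => exact .single (step_simple_mul_of_isLeftDescent hw)
  | @head a c hstep hle ih =>
    by_cases hu : cs.IsLeftDescent a i
    · exact .head (step_simple_mul_of_isLeftDescent hu) (.head hstep hle)
    · rcases hstep.simple_mul_eq_or_step hu with heq | hstep'
      · exact heq ▸ hle
      · exact .head hstep' ih

theorem BruhatLE.mul_left_of_mem_parabolic {w u x : W}
    (hx : x ∈ parabolic cs (leftDescents cs w)) (h : BruhatLE cs u w) :
    BruhatLE cs (x * u) w := by
  induction hx using Subgroup.closure_induction_left generalizing u with
  | one => simpa using h
  | mul_left _ hs _ _ ih =>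
    obtain ⟨i, hi, rfl⟩ := hs
    rw [mul_assoc]
    exact (ih h).simple_mul hi
  | inv_mul_cancel _ hs _ _ ih =>
    obtain ⟨i, hi, rfl⟩ := hs
    rw [cs.inv_simple, mul_assoc]
    exact (ih h).simple_mul hi

theorem rightDescents_eq_leftDescents_inv (cs : CoxeterSystem M W) (w : W) :
    rightDescents cs w = leftDescents cs w⁻¹ :=
  Set.ext fun _ => cs.isLeftDescent_inv_iff.symm

theorem BruhatLE.mul_right_of_mem_parabolic {w u y : W}
    (hy : y ∈ parabolic cs (rightDescents cs w)) (h : BruhatLE cs u w) :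
    BruhatLE cs (u * y) w := by
  rw [rightDescents_eq_leftDescents_inv] at hy
  simpa using (h.inv.mul_left_of_mem_parabolic (inv_mem hy)).inv

end BruhatOrder

/-- The double coset `W_{D_L(w)} u W_{D_R(w)}` is contained in the lower interval `[e, w]`. -/
theorem bCoset_subset_lowerInterval (cs : CoxeterSystem M W) (w u : W)
    (h : BruhatLE cs u w) (x y : W)
    (hx : x ∈ parabolic cs (leftDescents cs w)) (hy : y ∈ parabolic cs (rightDescents cs w)) :
    BruhatLE cs (x * u * y) w :=
  (h.mul_left_of_mem_parabolic hx).mul_right_of_mem_parabolic hy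

end CoxeterBruhat
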